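/- Let z : ℤ → ℝ → ℝ be a family of differentiable functions with (z_{n+1}(t) + 1)(z_n(t) − 1) + 4 ≠ 0 for all n, t, satisfying for all n ∈ ℤ and t ∈ ℝ the equation ż_n = 4(z_n² − 1)[ 2 Ω_n + (z_{n−1} − 1) Ω_{n−1} − (z_{n+1} + 1) Ω_{n+1} ], where Ω_n = 1/([(z_{n+1} + 1)(z_n − 1) + 4][(z_n + 1)(z_{n−1} − 1) + 4]). Define u_n(t) = 4(z_{n+2} + 1)(z_{n+1}² − 1)(z_n − 1) / ([(z_{n+3} + 1)(z_{n+2} − 1) + 4][(z_{n+2} + 1)(z_{n+1} − 1) + 4][(z_{n+1} + 1)(z_n − 1) + 4]) (all at time t). Then for all n ∈ ℤ and t ∈ ℝ, u̇_n = u_n (u_{n+2} + u_{n+1} − u_{n−1} − u_{n−2}), i.e., u solves the INB equation. -/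

import Mathlib

/-!
Put `Pₙ = (z_{n+1} + 1)(zₙ - 1)` and `Sₙ = Pₙ / (Pₙ + 4)`, so that `1 - Sₙ = 4 / (Pₙ + 4)` and
`uₙ = Sₙ S_{n+1} (1 - S_{n+2})`. The equation for `z` says exactly that
`Ṗₙ = Pₙ (S_{n+1} S_{n+2} - S_{n-1} S_{n-2})`: the four `Ω`-terms of `Ṗₙ` pair up into
`1 - S_{n-2} S_{n-1}` and `1 - S_{n+1} S_{n+2}`. Hence `S` solves the modified INB equation
`Ṡₙ = Sₙ (1 - Sₙ) (S_{n+1} S_{n+2} - S_{n-1} S_{n-2})`, and the Miura map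
`S ↦ Sₙ S_{n+1} (1 - S_{n+2})` sends solutions of the modified INB equation to solutions of INB.
-/

variable {𝕜 : Type*} [NontriviallyNormedField 𝕜]

def IsINBSolution (u : ℤ → 𝕜 → 𝕜) : Prop :=
  ∀ n t, HasDerivAt (u n) (u n t * (u (n + 2) t + u (n + 1) t - u (n - 1) t - u (n - 2) t)) t

def IsModifiedINBSolution (S : ℤ → 𝕜 → 𝕜) : Prop :=
  ∀ n t, HasDerivAt (S n)
    (S n t * (1 - S n t) * (S (n + 1) t * S (n + 2) t - S (n - 1) t * S (n - 2) t)) t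

theorem IsModifiedINBSolution.isINBSolution {S : ℤ → 𝕜 → 𝕜} (hS : IsModifiedINBSolution S) :
    IsINBSolution fun n t => S n t * S (n + 1) t * (1 - S (n + 2) t) := by
  intro n t
  refine (((hS n t).mul (hS (n + 1) t)).mul ((hS (n + 2) t).const_sub 1)).congr_deriv ?_
  simp only [Pi.mul_apply]
  -- `ring_nf` rather than `ring`: the indices `n + 1 + 2`, `n + 2 - 1`, … must be normalized too
  ring_nf

theorem HasDerivAt.div_add_const_of_eq_mul {f : 𝕜 → 𝕜} {x c t : 𝕜} (hf : HasDerivAt f (f t * x) t)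
    (hc : f t + c ≠ 0) :
    HasDerivAt (fun s => f s / (f s + c)) (f t / (f t + c) * (1 - f t / (f t + c)) * x) t := by
  refine (hf.div (hf.add_const c) hc).congr_deriv ?_
  field_simp

def miuraNum (z : ℤ → 𝕜 → 𝕜) (n : ℤ) (t : 𝕜) : 𝕜 := (z (n + 1) t + 1) * (z n t - 1)

def miuraMap (z : ℤ → 𝕜 → 𝕜) (n : ℤ) (t : 𝕜) : 𝕜 := miuraNum z n t / (miuraNum z n t + 4)

theorem four_mul_one_div_add_mul_one_div {K : Type*} [Field K] {p q : K} (hp : p + 4 ≠ 0)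
    (hq : q + 4 ≠ 0) :
    4 * (1 / (q + 4) + q * (1 / ((q + 4) * (p + 4)))) = 1 - p / (p + 4) * (q / (q + 4)) := by
  field_simp
  ring

theorem hasDerivAt_miuraNum {z Ω : ℤ → 𝕜 → 𝕜} (hzne : ∀ n t, miuraNum z n t + 4 ≠ 0)
    (hΩ : ∀ n t, Ω n t = 1 / ((miuraNum z n t + 4) * (miuraNum z (n - 1) t + 4)))
    (hz : ∀ n t, HasDerivAt (z n)
      (4 * ((z n t) ^ 2 - 1) * (2 * Ω n t + (z (n - 1) t - 1) * Ω (n - 1) t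
        - (z (n + 1) t + 1) * Ω (n + 1) t)) t) (m : ℤ) (t : 𝕜) :
    HasDerivAt (miuraNum z m) (miuraNum z m t *
      (miuraMap z (m + 1) t * miuraMap z (m + 2) t - miuraMap z (m - 1) t * miuraMap z (m - 2) t)) t := by
  have hderiv : HasDerivAt (miuraNum z m) (4 * miuraNum z m t *
      (1 / (miuraNum z (m - 1) t + 4) + miuraNum z (m - 1) t * Ω (m - 1) t
        - (1 / (miuraNum z (m + 1) t + 4) + miuraNum z (m + 1) t * Ω (m + 2) t))) t := by
    refine (((hz (m + 1) t).add_const 1).mul ((hz m t).sub_const 1)).congr_deriv ?_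
    have h2 : m + 1 + 1 = m + 2 := by ring
    rw [add_sub_cancel_right, h2, hΩ m, hΩ (m + 1), add_sub_cancel_right]
    field_simp [hzne m t]
    simp only [miuraNum, sub_add_cancel, h2]
    ring
  have hlow : 4 * (1 / (miuraNum z (m - 1) t + 4) + miuraNum z (m - 1) t * Ω (m - 1) t)
      = 1 - miuraMap z (m - 2) t * miuraMap z (m - 1) t := by
    rw [hΩ, sub_sub, one_add_one_eq_two]
    exact four_mul_one_div_add_mul_one_div (hzne _ t) (hzne _ t)
  have hhigh : 4 * (1 / (miuraNum z (m + 1) t + 4) + miuraNum z (m + 1) t * Ω (m + 2) t)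
      = 1 - miuraMap z (m + 2) t * miuraMap z (m + 1) t := by
    rw [hΩ, show m + 2 - 1 = m + 1 by ring, mul_comm (miuraNum z (m + 2) t + 4)]
    exact four_mul_one_div_add_mul_one_div (hzne _ t) (hzne _ t)
  refine hderiv.congr_deriv ?_
  linear_combination miuraNum z m t * (hlow - hhigh)

/-- Equation `żₙ = 4(zₙ²−1)[2Ωₙ + (z_{n−1}−1)Ω_{n−1} − (z_{n+1}+1)Ω_{n+1}]`, where
`Ωₙ = 1/([(z_{n+1}+1)(zₙ−1)+4][(zₙ+1)(z_{n−1}−1)+4])`, is transformed into the INB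
equation by the Miura-type composition transformation
`uₙ = 4(z_{n+2}+1)(z_{n+1}²−1)(zₙ−1) /
 ([(z_{n+3}+1)(z_{n+2}−1)+4][(z_{n+2}+1)(z_{n+1}−1)+4][(z_{n+1}+1)(zₙ−1)+4])`. -/
theorem stmt_18 (z : ℤ → ℝ → ℝ)
    (hzne : ∀ (n : ℤ) (t : ℝ), (z (n + 1) t + 1) * (z n t - 1) + 4 ≠ 0)
    (Ω : ℤ → ℝ → ℝ)
    (hΩ : ∀ (n : ℤ) (t : ℝ), Ω n t =
      1 / (((z (n + 1) t + 1) * (z n t - 1) + 4) * ((z n t + 1) * (z (n - 1) t - 1) + 4)))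
    (hz : ∀ (n : ℤ) (t : ℝ), HasDerivAt (z n)
      (4 * ((z n t) ^ 2 - 1) * (2 * Ω n t + (z (n - 1) t - 1) * Ω (n - 1) t
        - (z (n + 1) t + 1) * Ω (n + 1) t)) t)
    (u : ℤ → ℝ → ℝ)
    (hu : ∀ (n : ℤ) (t : ℝ), u n t =
      4 * (z (n + 2) t + 1) * ((z (n + 1) t) ^ 2 - 1) * (z n t - 1)
        / (((z (n + 3) t + 1) * (z (n + 2) t - 1) + 4)
          * ((z (n + 2) t + 1) * (z (n + 1) t - 1) + 4)
          * ((z (n + 1) t + 1) * (z n t - 1) + 4))) :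
    ∀ (n : ℤ) (t : ℝ), HasDerivAt (u n)
      (u n t * (u (n + 2) t + u (n + 1) t - u (n - 1) t - u (n - 2) t)) t := by
  have hΩ' : ∀ n t, Ω n t = 1 / ((miuraNum z n t + 4) * (miuraNum z (n - 1) t + 4)) := by
    intro n t
    rw [hΩ, miuraNum, miuraNum, sub_add_cancel]
  have hS : IsModifiedINBSolution (miuraMap z) := fun m t =>
    (hasDerivAt_miuraNum hzne hΩ' hz m t).div_add_const_of_eq_mul (hzne m t)
  have hu' : u = fun n t => miuraMap z n t * miuraMap z (n + 1) t * (1 - miuraMap z (n + 2) t) := by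
    funext n t
    have h2 : n + 1 + 1 = n + 2 := by ring
    have h3 : n + 2 + 1 = n + 3 := by ring
    have hA1 := hzne (n + 1) t
    have hA2 := hzne (n + 2) t
    simp only [hu, miuraMap, miuraNum, h2, h3] at hA1 hA2 ⊢
    field_simp [hzne n t, hA1, hA2]
    ring
  rw [hu']
  exact hS.isINBSolution
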